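/- arXiv:math/9812087 — 2 statements merged into one kernel-verified Lean document; each statement's English description precedes it below -/
import Mathlib

section
/- Let F be a free group with Fox derivatives ∂_i and iterated augmented derivatives ε_I = ε ∘ ∂_{i₁} ∘ … ∘ ∂_{i_k} for I = (i₁,…,i_k). If w lies in the q-th lower central series term F_q and |I| < q, then ε_I(w) = 0. -/
/-! Fox free differential calculus on the free group `F(n)`, with values in the
integral group ring `ℤF`. -/

/-- The integral group ring of the free group on `n` generators. -/
abbrev FreeGroupRing (n : ℕ) := MonoidAlgebra ℤ (FreeGroup (Fin n))

/-- Left multiplication by a group element, as an additive automorphism of `ℤF`. -/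
noncomputable def lmulAut {n : ℕ} (g : FreeGroup (Fin n)) :
    FreeGroupRing n ≃+ FreeGroupRing n where
  toFun a := MonoidAlgebra.of ℤ (FreeGroup (Fin n)) g * a
  invFun a := MonoidAlgebra.of ℤ (FreeGroup (Fin n)) g⁻¹ * a
  left_inv a := by
    show MonoidAlgebra.of ℤ (FreeGroup (Fin n)) g⁻¹ *
        (MonoidAlgebra.of ℤ (FreeGroup (Fin n)) g * a) = a
    rw [← mul_assoc, ← map_mul, inv_mul_cancel, map_one, one_mul]
  right_inv a := by
    show MonoidAlgebra.of ℤ (FreeGroup (Fin n)) g *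
        (MonoidAlgebra.of ℤ (FreeGroup (Fin n)) g⁻¹ * a) = a
    rw [← mul_assoc, ← map_mul, mul_inv_cancel, map_one, one_mul]
  map_add' a b := mul_add _ a b

/-- The action of `F(n)` on `ℤF` by left multiplication, as a homomorphism to the
multiplicative automorphisms of the (multiplicatively written) additive group `ℤF`. -/
noncomputable def foxAction (n : ℕ) :
    FreeGroup (Fin n) →* MulAut (Multiplicative (FreeGroupRing n)) where
  toFun g := AddEquiv.toMultiplicative (lmulAut g)
  map_one' := by
    ext a : 1
    show Multiplicative.ofAdd (MonoidAlgebra.single 1 1 * Multiplicative.toAdd a) = a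
    simp [MonoidAlgebra.one_def.symm]
  map_mul' g h := by
    ext a : 1
    show MonoidAlgebra.single (g * h) 1 * Multiplicative.toAdd a =
      MonoidAlgebra.single g 1 * (MonoidAlgebra.single h 1 * Multiplicative.toAdd a)
    rw [← mul_assoc, MonoidAlgebra.single_mul_single, mul_one]

/-- The homomorphism `F(n) → ℤF ⋊ F(n)` whose first component computes the `i`-th
Fox derivative: it sends `x_j` to `(δ_{ij}, x_j)`. -/
noncomputable def foxHom {n : ℕ} (i : Fin n) :
    FreeGroup (Fin n) →* SemidirectProduct (Multiplicative (FreeGroupRing n))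
      (FreeGroup (Fin n)) (foxAction n) :=
  FreeGroup.lift fun j =>
    ⟨Multiplicative.ofAdd (if j = i then (1 : FreeGroupRing n) else 0), FreeGroup.of j⟩

/-- The `i`-th Fox derivative `∂_i : F(n) → ℤF`, characterized by `∂_i(x_j) = δ_{ij}`
and `∂_i(uv) = ∂_i(u) + u·∂_i(v)`. -/
noncomputable def foxDeriv {n : ℕ} (i : Fin n) (w : FreeGroup (Fin n)) : FreeGroupRing n :=
  Multiplicative.toAdd (foxHom i w).left

/-- The `ℤ`-linear extension of the Fox derivative to the group ring `ℤF`. -/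
noncomputable def foxDerivLin {n : ℕ} (i : Fin n) : FreeGroupRing n →ₗ[ℤ] FreeGroupRing n :=
  Finsupp.lift (FreeGroupRing n) ℤ (FreeGroup (Fin n)) (foxDeriv i) ∘ₗ
    (MonoidAlgebra.coeffLinearEquiv ℤ).toLinearMap

/-- The augmentation map `ε : ℤF → ℤ`, sending every group element to `1`. -/
noncomputable def augmentation (n : ℕ) : FreeGroupRing n →ₐ[ℤ] ℤ :=
  MonoidAlgebra.lift ℤ ℤ (FreeGroup (Fin n)) 1

/-- Iterated Fox derivatives `∂_{i₁} ∘ ⋯ ∘ ∂_{i_k}` (applied right-to-left). -/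
noncomputable def foxIter {n : ℕ} : List (Fin n) → FreeGroupRing n → FreeGroupRing n
  | [], a => a
  | i :: I, a => foxDerivLin i (foxIter I a)

/-- The composite `ε_I = ε ∘ ∂_{i₁} ∘ ⋯ ∘ ∂_{i_k}` applied to a group element. -/
noncomputable def epsFox {n : ℕ} (I : List (Fin n)) (w : FreeGroup (Fin n)) : ℤ :=
  augmentation n (foxIter I (MonoidAlgebra.of ℤ (FreeGroup (Fin n)) w))


/-! With `Δ = ker ε`, the product rule `∂_i(ab) = ∂_i(a) ε(b) + a ∂_i(b)` shows that
`∂_i` maps `Δ^(m+2)` into `Δ^(m+1)`. On the other hand `F_q` lies in the dimension subgroup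
`{w | w - 1 ∈ Δ^q}`, because `[g, h] - 1 = ((g-1)(h-1) - (h-1)(g-1)) g⁻¹h⁻¹`. Hence
`∂_I (w - 1) ∈ Δ^(q - |I|) ⊆ Δ` is killed by `ε`, while `∂_I 1 = 0` for `I ≠ []`. -/

open MonoidAlgebra
open scoped commutatorElement

section DimensionSubgroup

variable (k G : Type*) [CommRing k] [Group G]

noncomputable def augmentationIdeal : Submodule k (MonoidAlgebra k G) :=
  LinearMap.ker (MonoidAlgebra.lift k k G 1).toLinearMap

variable {k G}

theorem mem_augmentationIdeal {a : MonoidAlgebra k G} :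
    a ∈ augmentationIdeal k G ↔ MonoidAlgebra.lift k k G 1 a = 0 :=
  Iff.rfl

theorem of_sub_one_mem_augmentationIdeal (g : G) : of k G g - 1 ∈ augmentationIdeal k G := by
  simp [mem_augmentationIdeal]

theorem augmentationIdeal_mul_top : augmentationIdeal k G * ⊤ ≤ augmentationIdeal k G :=
  Submodule.mul_le.mpr fun a ha b _ => by
    rw [mem_augmentationIdeal, map_mul, mem_augmentationIdeal.mp ha, zero_mul]

theorem top_mul_augmentationIdeal : ⊤ * augmentationIdeal k G ≤ augmentationIdeal k G :=
  Submodule.mul_le.mpr fun a _ b hb => by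
    rw [mem_augmentationIdeal, map_mul, mem_augmentationIdeal.mp hb, mul_zero]

theorem augmentationIdeal_pow_succ_mul_top (m : ℕ) :
    augmentationIdeal k G ^ (m + 1) * ⊤ ≤ augmentationIdeal k G ^ (m + 1) := by
  rw [pow_succ, mul_assoc]
  exact mul_le_mul_right augmentationIdeal_mul_top _

theorem top_mul_augmentationIdeal_pow_succ (m : ℕ) :
    ⊤ * augmentationIdeal k G ^ (m + 1) ≤ augmentationIdeal k G ^ (m + 1) := by
  rw [pow_succ', ← mul_assoc]
  exact mul_le_mul_left top_mul_augmentationIdeal _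

theorem augmentationIdeal_pow_succ_le (m : ℕ) :
    augmentationIdeal k G ^ (m + 1) ≤ augmentationIdeal k G := by
  rw [pow_succ']
  exact (mul_le_mul_right le_top _).trans augmentationIdeal_mul_top

theorem mul_mem_augmentationIdeal_pow_succ_of_left {m : ℕ} {a : MonoidAlgebra k G}
    (ha : a ∈ augmentationIdeal k G ^ (m + 1)) (b : MonoidAlgebra k G) :
    a * b ∈ augmentationIdeal k G ^ (m + 1) :=
  augmentationIdeal_pow_succ_mul_top m (Submodule.mul_mem_mul ha Submodule.mem_top)

theorem mul_mem_augmentationIdeal_pow_succ_of_right {m : ℕ} (a : MonoidAlgebra k G)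
    {b : MonoidAlgebra k G} (hb : b ∈ augmentationIdeal k G ^ (m + 1)) :
    a * b ∈ augmentationIdeal k G ^ (m + 1) :=
  top_mul_augmentationIdeal_pow_succ m (Submodule.mul_mem_mul Submodule.mem_top hb)

variable (k G)

/-- The dimension subgroup `D_{m+1}`, indexed like `lowerCentralSeries`. -/
noncomputable def dimensionSubgroup (m : ℕ) : Subgroup G where
  carrier := {g | of k G g - 1 ∈ augmentationIdeal k G ^ (m + 1)}
  one_mem' := by
    show of k G 1 - 1 ∈ augmentationIdeal k G ^ (m + 1)
    rw [map_one, sub_self]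
    exact zero_mem _
  mul_mem' {g h} hg hh := by
    have key : of k G (g * h) - 1 = (of k G g - 1) * (of k G h) + (of k G h - 1) := by
      rw [map_mul]; noncomm_ring
    show of k G (g * h) - 1 ∈ augmentationIdeal k G ^ (m + 1)
    rw [key]
    exact add_mem (mul_mem_augmentationIdeal_pow_succ_of_left hg _) hh
  inv_mem' {g} hg := by
    have key : of k G g⁻¹ - 1 = -(of k G g⁻¹ * (of k G g - 1)) := by
      rw [mul_sub, ← map_mul, inv_mul_cancel, map_one, mul_one, neg_sub]
    show of k G g⁻¹ - 1 ∈ augmentationIdeal k G ^ (m + 1)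
    rw [key]
    exact neg_mem (mul_mem_augmentationIdeal_pow_succ_of_right _ hg)

variable {k G}

theorem mem_dimensionSubgroup {m : ℕ} {g : G} :
    g ∈ dimensionSubgroup k G m ↔ of k G g - 1 ∈ augmentationIdeal k G ^ (m + 1) :=
  Iff.rfl

theorem of_commutatorElement_sub_one (g h : G) :
    of k G ⁅g, h⁆ - 1 = ((of k G g - 1) * (of k G h - 1) - (of k G h - 1) * (of k G g - 1)) *
      (of k G g⁻¹ * of k G h⁻¹) := by
  have hg : of k G g * of k G g⁻¹ = 1 := by rw [← map_mul, mul_inv_cancel, map_one]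
  have hh : of k G h * of k G h⁻¹ = 1 := by rw [← map_mul, mul_inv_cancel, map_one]
  calc of k G ⁅g, h⁆ - 1
      = of k G g * of k G h * of k G g⁻¹ * of k G h⁻¹
          - of k G h * (of k G g * of k G g⁻¹) * of k G h⁻¹ := by
        rw [commutatorElement_def, map_mul, map_mul, map_mul, hg, mul_one, hh]
    _ = _ := by noncomm_ring

theorem lowerCentralSeries_le_dimensionSubgroup (m : ℕ) :
    (⊤ : Subgroup G).lowerCentralSeries m ≤ dimensionSubgroup k G m := by
  induction m with
  | zero =>
    intro g _
    rw [mem_dimensionSubgroup, zero_add, pow_one]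
    exact of_sub_one_mem_augmentationIdeal g
  | succ m ih =>
    refine Subgroup.commutator_le.mpr fun g hg h _ => ?_
    have hg' : of k G g - 1 ∈ augmentationIdeal k G ^ (m + 1) := ih hg
    have hh' : of k G h - 1 ∈ augmentationIdeal k G := of_sub_one_mem_augmentationIdeal h
    rw [mem_dimensionSubgroup, of_commutatorElement_sub_one]
    refine mul_mem_augmentationIdeal_pow_succ_of_left (sub_mem ?_ ?_) _
    · exact pow_succ (augmentationIdeal k G) (m + 1) ▸ Submodule.mul_mem_mul hg' hh'
    · exact pow_succ' (augmentationIdeal k G) (m + 1) ▸ Submodule.mul_mem_mul hh' hg'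

end DimensionSubgroup

section FoxCalculus

variable {n : ℕ}

theorem foxHom_right (i : Fin n) (w : FreeGroup (Fin n)) : (foxHom i w).right = w := by
  have : SemidirectProduct.rightHom.comp (foxHom i) = MonoidHom.id (FreeGroup (Fin n)) :=
    FreeGroup.ext_hom _ _ fun j => by simp [foxHom]
  exact DFunLike.congr_fun this w

theorem foxDeriv_one (i : Fin n) : foxDeriv i 1 = 0 := by
  rw [foxDeriv, map_one]
  rfl

theorem foxDeriv_mul (i : Fin n) (u v : FreeGroup (Fin n)) :
    foxDeriv i (u * v) = foxDeriv i u + of ℤ _ u * foxDeriv i v := by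
  rw [foxDeriv, map_mul, SemidirectProduct.mul_left, foxHom_right]
  rfl

theorem foxDerivLin_of (i : Fin n) (u : FreeGroup (Fin n)) :
    foxDerivLin i (of ℤ _ u) = foxDeriv i u := by
  simp [foxDerivLin, of_apply]

theorem augmentation_of (u : FreeGroup (Fin n)) : augmentation n (of ℤ _ u) = 1 := by
  simp [augmentation]

theorem mem_augmentationIdeal_iff_augmentation {a : FreeGroupRing n} :
    a ∈ augmentationIdeal ℤ (FreeGroup (Fin n)) ↔ augmentation n a = 0 :=
  Iff.rfl

theorem foxDerivLin_mul (i : Fin n) (a b : FreeGroupRing n) :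
    foxDerivLin i (a * b) = augmentation n b • foxDerivLin i a + a * foxDerivLin i b := by
  induction a using MonoidAlgebra.induction_on with
  | of u =>
    induction b using MonoidAlgebra.induction_on with
    | of v =>
      rw [← map_mul, foxDerivLin_of, foxDerivLin_of, foxDerivLin_of, augmentation_of,
        foxDeriv_mul, one_smul]
    | add b₁ b₂ h₁ h₂ =>
      simp only [mul_add, map_add, h₁, h₂, add_smul]
      abel
    | smul r b hb =>
      rw [mul_smul_comm, map_smul, hb, map_smul (augmentation n), map_smul (foxDerivLin i),
        smul_add, mul_smul_comm, smul_eq_mul, mul_smul]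
  | add a₁ a₂ h₁ h₂ =>
    rw [add_mul, map_add, h₁, h₂, map_add, smul_add, add_mul]
    abel
  | smul r a ha =>
    rw [smul_mul_assoc, map_smul, ha, map_smul, smul_add, smul_mul_assoc, smul_comm r]

theorem foxDerivLin_mem_augmentationIdeal_pow (i : Fin n) {m : ℕ} {a : FreeGroupRing n}
    (ha : a ∈ augmentationIdeal ℤ (FreeGroup (Fin n)) ^ (m + 2)) :
    foxDerivLin i a ∈ augmentationIdeal ℤ (FreeGroup (Fin n)) ^ (m + 1) := by
  rw [pow_succ] at ha
  refine Submodule.mul_induction_on ha (fun x hx y hy => ?_) fun x y hx hy => ?_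
  · rw [foxDerivLin_mul, mem_augmentationIdeal_iff_augmentation.mp hy, zero_smul, zero_add]
    exact mul_mem_augmentationIdeal_pow_succ_of_left hx _
  · rw [map_add]
    exact add_mem hx hy

theorem foxIter_mem_augmentationIdeal_pow (I : List (Fin n)) {m : ℕ} {a : FreeGroupRing n}
    (ha : a ∈ augmentationIdeal ℤ (FreeGroup (Fin n)) ^ (I.length + m + 1)) :
    foxIter I a ∈ augmentationIdeal ℤ (FreeGroup (Fin n)) ^ (m + 1) := by
  induction I generalizing m with
  | nil =>
    rw [List.length_nil, zero_add] at ha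
    exact ha
  | cons i I ih =>
    refine foxDerivLin_mem_augmentationIdeal_pow i (ih ?_)
    rwa [List.length_cons, show I.length + 1 + m + 1 = I.length + (m + 1) + 1 by omega] at ha

theorem foxIter_add (I : List (Fin n)) (a b : FreeGroupRing n) :
    foxIter I (a + b) = foxIter I a + foxIter I b := by
  induction I with
  | nil => rfl
  | cons i I ih => simp only [foxIter, ih, map_add]

theorem foxIter_one {I : List (Fin n)} (hI : I ≠ []) : foxIter I 1 = 0 := by
  induction I with
  | nil => exact absurd rfl hI
  | cons i I ih =>
    rcases eq_or_ne I [] with rfl | hI'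
    · rw [foxIter, foxIter, ← map_one (of ℤ _), foxDerivLin_of, foxDeriv_one]
    · rw [foxIter, ih hI', map_zero]

end FoxCalculus

/-- If `w` lies in the `q`-th lower central series term `F_q` of the free group
(`F₁ = F`, so `F_q = lowerCentralSeries F (q-1)`) and `I` is a (nonempty) multi-index
with `|I| < q`, then `ε_I(w) = 0`. -/
theorem epsFox_eq_zero_of_mem_lowerCentralSeries {n : ℕ} (q : ℕ)
    (I : List (Fin n)) (hne : I ≠ []) (hlen : I.length < q)
    (w : FreeGroup (Fin n))
    (hw : w ∈ (⊤ : Subgroup (FreeGroup (Fin n))).lowerCentralSeries (q - 1)) :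
    epsFox I w = 0 := by
  obtain ⟨m, hm⟩ : ∃ m, q - 1 = I.length + m := ⟨q - 1 - I.length, by omega⟩
  have hw' : of ℤ _ w - 1 ∈ augmentationIdeal ℤ (FreeGroup (Fin n)) ^ (I.length + m + 1) :=
    lowerCentralSeries_le_dimensionSubgroup (k := ℤ) _ (hm ▸ hw)
  have hI : foxIter I (of ℤ _ w - 1) ∈ augmentationIdeal ℤ (FreeGroup (Fin n)) :=
    augmentationIdeal_pow_succ_le m (foxIter_mem_augmentationIdeal_pow I hw')
  rw [epsFox, ← sub_add_cancel (of ℤ _ w) 1, foxIter_add, foxIter_one hne, add_zero]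
  exact mem_augmentationIdeal_iff_augmentation.mp hI
end

section
/- An integer matrix of block form (Q; p·I_n) (Q stacked above p times the n×n identity) is equivalent over Z to the diagonal block matrix diag(I_r, p·I_d), where r is the rank over Z/p of the mod-p reduction of Q and d = n − r. -/
/-!
Reduce `Q` modulo `p` by Gaussian elimination using only unitriangular matrices and row and
column swaps; these lift to unimodular integer matrices, so there are unimodular `U`, `V` with
`U Q V ≡ E (mod p)`, where `E` has the entries `u₀, …, u_{r-1}` (prime to `p`) on its diagonal
and zeros elsewhere. Row operations with the block `p I` clear the error term, leaving the stacked
matrix `(E; p I)`, which splits into the `2 × 1` blocks `(u_k; p)` for `k < r` and `(0; p)`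
otherwise. A unimodular `2 × 2` matrix built from a Bézout relation `x u_k + y p = 1` turns
`(u_k; p)` into `(0; 1)`.
-/

open Matrix

namespace Matrix

section RectDiag

variable {R : Type*} [CommRing R]

def rectDiag (m n : ℕ) (w : ℕ → R) : Matrix (Fin m) (Fin n) R :=
  of fun i j => if (i : ℕ) = j then w i else 0

@[simp]
lemma rectDiag_apply {m n : ℕ} (w : ℕ → R) (i : Fin m) (j : Fin n) :
    rectDiag m n w i j = if (i : ℕ) = j then w i else 0 := rfl

lemma rectDiag_congr {m n : ℕ} {w v : ℕ → R} (h : ∀ k < m, k < n → w k = v k) :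
    rectDiag m n w = rectDiag m n v := by
  ext i j
  simp only [rectDiag_apply]
  split_ifs with hij
  · exact h i i.isLt (hij ▸ j.isLt)
  · rfl

@[simp]
lemma rectDiag_zero {m n : ℕ} : rectDiag m n (fun _ => (0 : R)) = 0 := by
  ext; simp

lemma rectDiag_add {m n : ℕ} (w v : ℕ → R) :
    rectDiag m n w + rectDiag m n v = rectDiag m n (w + v) := by
  ext; simp only [add_apply, rectDiag_apply]; split_ifs <;> simp

lemma rectDiag_eq_diagonal (n : ℕ) (w : ℕ → R) :
    rectDiag n n w = diagonal fun i : Fin n => w i := by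
  ext i j
  simp [diagonal_apply, Fin.val_inj]

lemma rectDiag_mul_rectDiag {l m n : ℕ} (w v : ℕ → R) :
    rectDiag l m w * rectDiag m n v = rectDiag l n fun k => if k < m then w k * v k else 0 := by
  ext i j
  rw [mul_apply]
  by_cases him : (i : ℕ) < m
  · have hk : ∀ k : Fin m, k ≠ ⟨i, him⟩ → (i : ℕ) ≠ k := fun k hk h => hk (Fin.ext h.symm)
    rw [Finset.sum_eq_single ⟨i, him⟩ (fun k _ h => by simp [hk k h]) (by simp)]
    simp only [rectDiag_apply, if_pos him]
    split_ifs <;> simp_all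
  · rw [Finset.sum_eq_zero fun k _ => by simp [show (i : ℕ) ≠ k by omega]]
    simp [him]

lemma map_rectDiag {S : Type*} [CommRing S] (f : R →+* S) {m n : ℕ} (w : ℕ → R) :
    (rectDiag m n w).map f = rectDiag m n (f ∘ w) := by
  ext; simp [apply_ite f]

lemma rank_rectDiag {K : Type*} [Field K] {m n s : ℕ} {w : ℕ → K} (hm : s ≤ m) (hn : s ≤ n)
    (hw : ∀ k, w k ≠ 0 ↔ k < s) : (rectDiag m n w).rank = s := by
  classical
  have hw₀ : ∀ k, s ≤ k → w k = 0 := fun k hk => not_not.mp (mt (hw k).mp (by omega))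
  have hdiag : (rectDiag s s w).rank = s := by
    rw [rectDiag_eq_diagonal, rank_diagonal,
      Fintype.card_congr (Equiv.subtypeUnivEquiv fun i : Fin s => (hw i).mpr i.isLt),
      Fintype.card_fin]
  have hfactor :
      rectDiag m s (1 : ℕ → K) * rectDiag s s w * rectDiag s n (1 : ℕ → K) = rectDiag m n w := by
    rw [rectDiag_mul_rectDiag, rectDiag_mul_rectDiag]
    refine rectDiag_congr fun k _ _ => ?_
    by_cases hk : k < s
    · simp [hk]
    · simp [hk, hw₀ k (by omega)]
  have hrestrict :
      rectDiag s m (1 : ℕ → K) * rectDiag m n w * rectDiag n s (1 : ℕ → K) = rectDiag s s w := by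
    rw [rectDiag_mul_rectDiag, rectDiag_mul_rectDiag]
    refine rectDiag_congr fun k hk _ => ?_
    simp [show k < m by omega, show k < n by omega]
  refine le_antisymm ?_ ?_
  · calc (rectDiag m n w).rank
        = (rectDiag m s (1 : ℕ → K) * rectDiag s s w * rectDiag s n (1 : ℕ → K)).rank := by
          rw [hfactor]
      _ ≤ (rectDiag s s w).rank := (rank_mul_le_left _ _).trans (rank_mul_le_right _ _)
      _ = s := hdiag
  · calc s = (rectDiag s m (1 : ℕ → K) * rectDiag m n w * rectDiag n s (1 : ℕ → K)).rank := by
          rw [hrestrict, hdiag]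
      _ ≤ (rectDiag m n w).rank := (rank_mul_le_left _ _).trans (rank_mul_le_right _ _)

end RectDiag

section Equivalent

variable {R : Type*} [CommRing R] {m n : Type*} [Fintype m] [Fintype n] [DecidableEq m]
  [DecidableEq n]

def Equivalent (A B : Matrix m n R) : Prop :=
  ∃ (P : Matrix m m R) (Q : Matrix n n R), IsUnit P.det ∧ IsUnit Q.det ∧ P * A * Q = B

lemma Equivalent.trans {A B C : Matrix m n R} (hAB : Equivalent A B) (hBC : Equivalent B C) :
    Equivalent A C := by
  obtain ⟨P, Q, hP, hQ, rfl⟩ := hAB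
  obtain ⟨P', Q', hP', hQ', rfl⟩ := hBC
  refine ⟨P' * P, Q * Q', by simpa using hP'.mul hP, by simpa using hQ.mul hQ', ?_⟩
  simp only [Matrix.mul_assoc]

lemma equivalent_fromRows_mul_mul (c : R) (A : Matrix m n R) {U : Matrix m m R}
    {V : Matrix n n R} (hU : IsUnit U.det) (hV : IsUnit V.det) :
    Equivalent (fromRows A (c • 1 : Matrix n n R)) (fromRows (U * A * V) (c • 1)) := by
  refine ⟨fromBlocks U 0 0 V⁻¹, V, ?_, hV, ?_⟩
  · rw [det_fromBlocks_zero₂₁]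
    exact hU.mul (isUnit_nonsing_inv_det V hV)
  · rw [fromBlocks_mul_fromRows, fromRows_mul]
    simp [Matrix.mul_smul, nonsing_inv_mul V hV]

lemma equivalent_fromRows_add_smul (c : R) (A X : Matrix m n R) :
    Equivalent (fromRows (A + c • X) (c • 1 : Matrix n n R)) (fromRows A (c • 1)) := by
  refine ⟨fromBlocks 1 (-X) 0 1, 1, by simp, by simp, ?_⟩
  rw [fromBlocks_mul_fromRows]
  simp [Matrix.mul_smul]

end Equivalent

section PairDiag

variable {R : Type*} [CommRing R]

/-- Left multiplication by `pairDiag m n φ` acts on the pair formed by the `k`-th rows of the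
two blocks through the `2 × 2` matrix `φ k`. -/
def pairDiag (m n : ℕ) (φ : ℕ → Matrix (Fin 2) (Fin 2) R) :
    Matrix (Fin m ⊕ Fin n) (Fin m ⊕ Fin n) R :=
  fromBlocks (rectDiag m m fun k => φ k 0 0) (rectDiag m n fun k => φ k 0 1)
    (rectDiag n m fun k => φ k 1 0) (rectDiag n n fun k => φ k 1 1)

lemma pairDiag_mul_pairDiag {m n : ℕ} {φ : ℕ → Matrix (Fin 2) (Fin 2) R}
    (hφ : ∀ k, m ≤ k ∨ n ≤ k → φ k 0 1 = 0 ∧ φ k 1 0 = 0) (ψ : ℕ → Matrix (Fin 2) (Fin 2) R) :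
    pairDiag m n φ * pairDiag m n ψ = pairDiag m n (φ * ψ) := by
  simp only [pairDiag, fromBlocks_multiply, rectDiag_mul_rectDiag, rectDiag_add]
  congr 1 <;> refine rectDiag_congr fun k hk hk' => ?_ <;>
    simp [mul_apply, Fin.sum_univ_two, hk, hk'] <;> grind

lemma pairDiag_one (m n : ℕ) : pairDiag m n (1 : ℕ → Matrix (Fin 2) (Fin 2) R) = 1 := by
  simp [pairDiag, rectDiag_eq_diagonal, ← fromBlocks_one]

lemma pairDiag_mul_fromRows_zero_one {m n : ℕ} (φ : ℕ → Matrix (Fin 2) (Fin 2) R) :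
    pairDiag m n φ * fromRows (0 : Matrix (Fin m) (Fin n) R) (1 : Matrix (Fin n) (Fin n) R) =
      fromRows (rectDiag m n fun k => φ k 0 1) (rectDiag n n fun k => φ k 1 1) := by
  rw [pairDiag, fromBlocks_mul_fromRows]
  simp

lemma equivalent_fromRows_rectDiag_smul_one {m n r : ℕ} (c : R) {u : ℕ → R} (hrm : r ≤ m)
    (hrn : r ≤ n) (hu : ∀ k < r, IsCoprime (u k) c) (hu₀ : ∀ k, r ≤ k → u k = 0) :
    Equivalent (fromRows (rectDiag m n u) (c • 1 : Matrix (Fin n) (Fin n) R))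
      (fromRows 0 (diagonal fun i : Fin n => if (i : ℕ) < r then 1 else c)) := by
  have hxy : ∀ k, ∃ x y : R, k < r → x * u k + y * c = 1 := fun k =>
    if hk : k < r then (hu k hk).elim fun x ⟨y, h⟩ => ⟨x, y, fun _ => h⟩
    else ⟨0, 0, fun h => absurd h hk⟩
  choose x y hxy using hxy
  -- `M k` has determinant `-1` (inverse `M' k`) and sends `(u k, c)` to `(0, 1)`.
  set M : ℕ → Matrix (Fin 2) (Fin 2) R := fun k => if k < r then !![-c, u k; x k, y k] else 1
  set M' : ℕ → Matrix (Fin 2) (Fin 2) R := fun k => if k < r then !![-y k, u k; x k, c] else 1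
  have hM : ∀ k, m ≤ k ∨ n ≤ k → M k 0 1 = 0 ∧ M k 1 0 = 0 := fun k hk => by
    simp [M, show ¬k < r by omega]
  have hstack : fromRows (rectDiag m n u) (c • 1 : Matrix (Fin n) (Fin n) R) =
      pairDiag m n (fun k => !![1, u k; 0, c]) *
        fromRows (0 : Matrix (Fin m) (Fin n) R) (1 : Matrix (Fin n) (Fin n) R) := by
    rw [pairDiag_mul_fromRows_zero_one, rectDiag_eq_diagonal, smul_one_eq_diagonal]
    simp
  refine ⟨pairDiag m n M, 1, isUnit_det_of_right_inverse (B := pairDiag m n M') ?_, by simp, ?_⟩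
  · rw [pairDiag_mul_pairDiag hM, ← pairDiag_one m n]
    congr 1
    funext k
    by_cases hk : k < r
    · simp only [M, M', if_pos hk, Pi.mul_apply, mul_fin_two, Pi.one_apply, one_fin_two]
      ext i j
      fin_cases i <;> fin_cases j <;> simp <;> first | linear_combination hxy k hk | ring
    · simp [M, M', hk]
  · rw [Matrix.mul_one, hstack, ← Matrix.mul_assoc, pairDiag_mul_pairDiag hM,
      pairDiag_mul_fromRows_zero_one, rectDiag_eq_diagonal]
    congr 1
    · rw [← rectDiag_zero]
      refine rectDiag_congr fun k _ _ => ?_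
      by_cases hk : k < r
      · simp [M, hk]
        ring
      · simp [M, hk, hu₀ k (by omega)]
    · congr 1
      funext i
      by_cases hi : (i : ℕ) < r
      · simp [M, hi]
        linear_combination hxy i hi
      · simp [M, hi]

end PairDiag

section CornerBlocks

variable {R : Type*} {m n : ℕ}

def cornerBlocks (a : R) (b : Fin n → R) (c : Fin m → R) (D : Matrix (Fin m) (Fin n) R) :
    Matrix (Fin (m + 1)) (Fin (n + 1)) R :=
  of (vecCons (vecCons a b) fun i => vecCons (c i) (D i))

variable (a : R) (b : Fin n → R) (c : Fin m → R) (D : Matrix (Fin m) (Fin n) R)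

@[simp] lemma cornerBlocks_zero_zero : cornerBlocks a b c D 0 0 = a := rfl

@[simp] lemma cornerBlocks_zero_succ (j : Fin n) : cornerBlocks a b c D 0 j.succ = b j := by
  simp [cornerBlocks]

@[simp] lemma cornerBlocks_succ_zero (i : Fin m) : cornerBlocks a b c D i.succ 0 = c i := by
  simp [cornerBlocks]

@[simp] lemma cornerBlocks_succ_succ (i : Fin m) (j : Fin n) :
    cornerBlocks a b c D i.succ j.succ = D i j := by
  simp [cornerBlocks]

@[simp] lemma submatrix_succ_cornerBlocks :
    (cornerBlocks a b c D).submatrix Fin.succ Fin.succ = D := by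
  ext; simp

lemma eq_cornerBlocks (A : Matrix (Fin (m + 1)) (Fin (n + 1)) R) :
    A = cornerBlocks (A 0 0) (fun j => A 0 j.succ) (fun i => A i.succ 0)
      (A.submatrix Fin.succ Fin.succ) := by
  ext i j
  cases i using Fin.cases <;> cases j using Fin.cases <;> simp

variable [CommRing R]

lemma cornerBlocks_mul_cornerBlocks {l : ℕ} (a' : R) (b' : Fin l → R) (c' : Fin n → R)
    (D' : Matrix (Fin n) (Fin l) R) :
    cornerBlocks a b c D * cornerBlocks a' b' c' D' =
      cornerBlocks (a * a' + b ⬝ᵥ c') (a • b' + b ᵥ* D') (a' • c + D *ᵥ c')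
        (vecMulVec c b' + D * D') := by
  ext i j
  cases i using Fin.cases <;> cases j using Fin.cases <;>
    simp [mul_apply, Fin.sum_univ_succ, dotProduct, vecMul, mulVec, vecMulVec_apply, mul_comm]

lemma det_cornerBlocks_zero_col (a : R) (b : Fin m → R) (D : Matrix (Fin m) (Fin m) R) :
    (cornerBlocks a b 0 D).det = a * D.det := by
  rw [det_succ_column_zero, Fin.sum_univ_succ]
  simp

lemma det_cornerBlocks_zero_row (a : R) (c : Fin m → R) (D : Matrix (Fin m) (Fin m) R) :
    (cornerBlocks a 0 c D).det = a * D.det := by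
  rw [det_succ_row_zero, Fin.sum_univ_succ]
  simp

lemma map_cornerBlocks {S : Type*} [CommRing S] (f : R →+* S) :
    (cornerBlocks a b c D).map f = cornerBlocks (f a) (f ∘ b) (f ∘ c) (D.map f) := by
  ext i j
  cases i using Fin.cases <;> cases j using Fin.cases <;> simp

lemma cornerBlocks_rectDiag (w : ℕ → R) :
    cornerBlocks a 0 0 (rectDiag m n w) =
      rectDiag (m + 1) (n + 1) fun k => Nat.casesOn k a w := by
  ext i j
  cases i using Fin.cases <;> cases j using Fin.cases <;> simp

lemma cornerBlocks_schur {K : Type*} [Field K] {a : K} (ha : a ≠ 0) (b : Fin n → K)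
    (c : Fin m → K) (D : Matrix (Fin m) (Fin n) K) :
    cornerBlocks 1 0 (-a⁻¹ • c) (1 : Matrix (Fin m) (Fin m) K) * cornerBlocks a b c D *
        cornerBlocks 1 (-a⁻¹ • b) 0 (1 : Matrix (Fin n) (Fin n) K) =
      cornerBlocks a 0 0 (D - a⁻¹ • vecMulVec c b) := by
  rw [cornerBlocks_mul_cornerBlocks, cornerBlocks_mul_cornerBlocks]
  simp [smul_smul, ha, sub_eq_neg_add]

end CornerBlocks

section UnimodularLift

variable {R S : Type*} [CommRing R] [CommRing S] {ι : Type*} [Fintype ι] [DecidableEq ι]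

def HasUnimodularLift (f : R →+* S) (F : Matrix ι ι S) : Prop :=
  ∃ U : Matrix ι ι R, IsUnit U.det ∧ U.map f = F

variable {f : R →+* S}

lemma hasUnimodularLift_one : HasUnimodularLift f (1 : Matrix ι ι S) :=
  ⟨1, by simp, by simp⟩

lemma HasUnimodularLift.mul {F G : Matrix ι ι S} (hF : HasUnimodularLift f F)
    (hG : HasUnimodularLift f G) : HasUnimodularLift f (F * G) := by
  obtain ⟨U, hU, rfl⟩ := hF
  obtain ⟨V, hV, rfl⟩ := hG
  exact ⟨U * V, by simpa using hU.mul hV, Matrix.map_mul⟩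

lemma hasUnimodularLift_swap (i j : ι) : HasUnimodularLift f (swap S i j) := by
  refine ⟨swap R i j, ?_, map_swap f i j⟩
  rw [swap, det_permutation]
  exact (Equiv.Perm.sign _).isUnit.map (Int.castRingHom R)

lemma isUnit_det_map (f : R →+* S) {U : Matrix ι ι R} (hU : IsUnit U.det) :
    IsUnit (U.map f).det := by
  rw [← RingHom.mapMatrix_apply, ← RingHom.map_det]
  exact hU.map f

lemma HasUnimodularLift.cornerBlocks_zero_row {m : ℕ} {F : Matrix (Fin m) (Fin m) S}
    (hF : HasUnimodularLift f F) (hf : Function.Surjective f) (c : Fin m → S) :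
    HasUnimodularLift f (cornerBlocks 1 0 c F) := by
  obtain ⟨U, hU, rfl⟩ := hF
  refine ⟨cornerBlocks 1 0 (Function.surjInv hf ∘ c) U, by simpa [det_cornerBlocks_zero_row], ?_⟩
  rw [map_cornerBlocks]
  congr
  · simp
  · ext; simp
  · ext; simp [Function.surjInv_eq hf]

lemma HasUnimodularLift.cornerBlocks_zero_col {m : ℕ} {F : Matrix (Fin m) (Fin m) S}
    (hF : HasUnimodularLift f F) (hf : Function.Surjective f) (b : Fin m → S) :
    HasUnimodularLift f (cornerBlocks 1 b 0 F) := by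
  obtain ⟨U, hU, rfl⟩ := hF
  refine ⟨cornerBlocks 1 (Function.surjInv hf ∘ b) 0 U, by simpa [det_cornerBlocks_zero_col], ?_⟩
  rw [map_cornerBlocks]
  congr
  · simp
  · ext; simp [Function.surjInv_eq hf]
  · ext; simp

end UnimodularLift

section Elimination

variable {R K : Type*} [CommRing R] [Field K] {f : R →+* K}

lemma exists_hasUnimodularLift_mul_mul_eq_cornerBlocks (hf : Function.Surjective f) {m n : ℕ}
    {A : Matrix (Fin (m + 1)) (Fin (n + 1)) K} (hA : A ≠ 0) :
    ∃ (F : Matrix (Fin (m + 1)) (Fin (m + 1)) K) (G : Matrix (Fin (n + 1)) (Fin (n + 1)) K)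
      (a : K) (D : Matrix (Fin m) (Fin n) K),
      HasUnimodularLift f F ∧ HasUnimodularLift f G ∧ a ≠ 0 ∧ F * A * G = cornerBlocks a 0 0 D := by
  obtain ⟨i, j, hij⟩ : ∃ i j, A i j ≠ 0 := by
    by_contra! h
    exact hA (ext h)
  obtain ⟨a, b, c, D, hA'⟩ : ∃ a b c D, swap K 0 i * A * swap K 0 j = cornerBlocks a b c D :=
    ⟨_, _, _, _, eq_cornerBlocks _⟩
  have ha : a ≠ 0 := by
    have hpivot : (swap K 0 i * A * swap K 0 j) 0 0 = A i j := by
      rw [mul_swap_apply_left, swap_mul_apply_left]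
    rw [hA', cornerBlocks_zero_zero] at hpivot
    exact hpivot ▸ hij
  refine ⟨cornerBlocks 1 0 (-a⁻¹ • c) 1 * swap K 0 i, swap K 0 j * cornerBlocks 1 (-a⁻¹ • b) 0 1,
    a, D - a⁻¹ • vecMulVec c b, (hasUnimodularLift_one.cornerBlocks_zero_row hf _).mul
      (hasUnimodularLift_swap _ _), (hasUnimodularLift_swap _ _).mul
      (hasUnimodularLift_one.cornerBlocks_zero_col hf _), ha, ?_⟩
  rw [← cornerBlocks_schur ha, ← hA']
  simp only [Matrix.mul_assoc]

theorem exists_hasUnimodularLift_mul_mul_eq_rectDiag (hf : Function.Surjective f) {m n : ℕ}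
    (A : Matrix (Fin m) (Fin n) K) :
    ∃ (F : Matrix (Fin m) (Fin m) K) (G : Matrix (Fin n) (Fin n) K) (s : ℕ) (w : ℕ → K),
      HasUnimodularLift f F ∧ HasUnimodularLift f G ∧ s ≤ m ∧ s ≤ n ∧
        (∀ k, w k ≠ 0 ↔ k < s) ∧ F * A * G = rectDiag m n w := by
  induction m generalizing n with
  | zero =>
    exact ⟨1, 1, 0, fun _ => 0, hasUnimodularLift_one, hasUnimodularLift_one, le_rfl, Nat.zero_le _,
      by simp, Subsingleton.elim _ _⟩
  | succ m ih =>
    obtain rfl | hA := eq_or_ne A 0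
    · exact ⟨1, 1, 0, fun _ => 0, hasUnimodularLift_one, hasUnimodularLift_one, Nat.zero_le _,
        Nat.zero_le _, by simp, by simp⟩
    obtain ⟨n, rfl⟩ : ∃ n', n = n' + 1 :=
      Nat.exists_eq_succ_of_ne_zero fun hn => hA (by subst hn; exact Subsingleton.elim _ _)
    obtain ⟨F, G, a, D, hF, hG, ha, hFAG⟩ := exists_hasUnimodularLift_mul_mul_eq_cornerBlocks hf hA
    obtain ⟨F', G', s, w, hF', hG', hsm, hsn, hw, hD⟩ := ih D
    refine ⟨cornerBlocks 1 0 0 F' * F, G * cornerBlocks 1 0 0 G', s + 1,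
      fun k => Nat.casesOn k a w, (hF'.cornerBlocks_zero_row hf 0).mul hF,
      hG.mul (hG'.cornerBlocks_zero_row hf 0), by omega, by omega, ?_, ?_⟩
    · rintro (_ | k) <;> simp [ha, hw]
    · calc _ = cornerBlocks 1 0 0 F' * (F * A * G) * cornerBlocks 1 0 0 G' := by
            simp only [Matrix.mul_assoc]
        _ = _ := by
          rw [hFAG, cornerBlocks_mul_cornerBlocks, cornerBlocks_mul_cornerBlocks]
          simp [hD, cornerBlocks_rectDiag]

end Elimination

lemma exists_eq_rectDiag_val_add_smul {p m n : ℕ} [NeZero p] {M : Matrix (Fin m) (Fin n) ℤ}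
    {w : ℕ → ZMod p} (h : M.map (Int.castRingHom (ZMod p)) = rectDiag m n w) :
    ∃ X, M = rectDiag m n (fun k => ((w k).val : ℤ)) + (p : ℤ) • X := by
  set E := rectDiag m n fun k => ((w k).val : ℤ)
  have hE : E.map (Int.castRingHom (ZMod p)) = rectDiag m n w := by
    rw [map_rectDiag]
    congr 1
    funext k
    simp
  have hdvd : ∀ i j, (p : ℤ) ∣ M i j - E i j := fun i j => by
    rw [← ZMod.intCast_zmod_eq_zero_iff_dvd, Int.cast_sub, sub_eq_zero]
    exact congr_fun₂ (h.trans hE.symm) i j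
  refine ⟨of fun i j => (M i j - E i j) / p, ?_⟩
  ext i j
  simp [Int.mul_ediv_cancel' (hdvd i j)]

end Matrix

theorem stacked_matrix_smith_form_general
    (m n p : ℕ) [Fact p.Prime] (Q : Matrix (Fin m) (Fin n) ℤ)
    (r : ℕ) (hr : r = (Q.map (fun x : ℤ => (x : ZMod p))).rank) :
    ∃ (P : Matrix (Fin m ⊕ Fin n) (Fin m ⊕ Fin n) ℤ) (Q' : Matrix (Fin n) (Fin n) ℤ),
      IsUnit P.det ∧ IsUnit Q'.det ∧
      P * Matrix.fromRows Q ((p : ℤ) • (1 : Matrix (Fin n) (Fin n) ℤ)) * Q' =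
        Matrix.fromRows (0 : Matrix (Fin m) (Fin n) ℤ)
          (Matrix.diagonal fun i : Fin n => if (i : ℕ) < r then 1 else (p : ℤ)) := by
  obtain ⟨_, _, s, w, ⟨U, hU, rfl⟩, ⟨V, hV, rfl⟩, hsm, hsn, hw, hUQV⟩ :=
    exists_hasUnimodularLift_mul_mul_eq_rectDiag (ZMod.ringHom_surjective (Int.castRingHom _))
      (Q.map (Int.castRingHom (ZMod p)))
  rw [← Matrix.map_mul, ← Matrix.map_mul] at hUQV
  have hrs : r = s := by
    rw [hr, ← rank_rectDiag hsm hsn hw, ← hUQV, Matrix.map_mul, Matrix.map_mul,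
      rank_mul_eq_left_of_isUnit_det _ _ (isUnit_det_map _ hV),
      rank_mul_eq_right_of_isUnit_det _ _ (isUnit_det_map _ hU)]
    rfl
  subst hrs
  obtain ⟨X, hX⟩ := exists_eq_rectDiag_val_add_smul hUQV
  have hcop : ∀ k < r, IsCoprime ((w k).val : ℤ) p := fun k hk =>
    Nat.isCoprime_iff_coprime.mpr (ZMod.val_coe_unit_coprime (Units.mk0 (w k) ((hw k).mpr hk)))
  have hzero : ∀ k, r ≤ k → ((w k).val : ℤ) = 0 := fun k hk => by
    simp [not_not.mp (mt (hw k).mp (by omega))]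
  refine ((equivalent_fromRows_mul_mul _ Q hU hV).trans ?_).trans
    (equivalent_fromRows_rectDiag_smul_one _ hsm hsn hcop hzero)
  rw [hX]
  exact equivalent_fromRows_add_smul _ _ _

/-- An integer matrix of block form `(Q; p·I_n)` (`Q` stacked above `p` times the `n×n`
identity) is equivalent over `ℤ` to the diagonal block matrix `diag(I_r, p·I_d)`
(padded by zero rows), where `r` is the rank over `ℤ/p` of the mod-`p` reduction of
`Q` and `d = n − r`. -/
theorem stacked_matrix_smith_form
    (m n p : ℕ) (hp : p.Prime) [Fact p.Prime] (Q : Matrix (Fin m) (Fin n) ℤ)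
    (r : ℕ) (hr : r = (Q.map (fun x : ℤ => (x : ZMod p))).rank) :
    ∃ (P : Matrix (Fin m ⊕ Fin n) (Fin m ⊕ Fin n) ℤ) (Q' : Matrix (Fin n) (Fin n) ℤ),
      IsUnit P.det ∧ IsUnit Q'.det ∧
      P * Matrix.fromRows Q ((p : ℤ) • (1 : Matrix (Fin n) (Fin n) ℤ)) * Q' =
        Matrix.fromRows (0 : Matrix (Fin m) (Fin n) ℤ)
          (Matrix.diagonal fun i : Fin n => if (i : ℕ) < r then 1 else (p : ℤ)) :=
  stacked_matrix_smith_form_general m n p Q r hr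
end
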